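/- arXiv:2103.14278 — 3 statements merged into one kernel-verified Lean document; each statement's English description precedes it below -/
import Mathlib

section
/- Let Q be an n×n real matrix that is entrywise nonnegative with every column sum at most 1 (Σ_i Q_{ij} ≤ 1 for all j), and let P = diag(p_1, …, p_n) be a diagonal matrix with 0 ≤ p_j < 1 for all j. Then I − QP is invertible and every column sum of the matrix A = (I − P)(I − QP)^{−1} is at most 1; consequently the spectral radius of A is at most 1. -/
open scoped ENNReal
open Matrix

/-- The spectral radius of a real square matrix: the supremum of the moduli of its
complex eigenvalues (the spectrum of the matrix viewed as a complex matrix). -/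
noncomputable def specRad {n : ℕ} (M : Matrix (Fin n) (Fin n) ℝ) : ℝ≥0∞ :=
  spectralRadius ℂ (M.map fun a => (a : ℂ))

/-!
Write `B = Q P`. It is entrywise nonnegative and its `j`-th column sum is `p j * ∑ i, Q i j ≤ p j < 1`,
so `B` contracts the `ℓ¹` norm of nonnegative vectors. Hence the negative part of any `x` with
`B x ≤ x` vanishes: `I - B` is invertible and `(I - B)⁻¹` is entrywise nonnegative. The column sums of
`I - P` are dominated by those of `I - B`, and right multiplication by the nonnegative matrix
`(I - B)⁻¹` preserves this, so the column sums of `A` are at most those of `(I - B)(I - B)⁻¹ = I`.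
Finally, for an eigenvector `v` of `A` with eigenvalue `λ`, the column-sum bound gives
`|λ| ∑ |v i| ≤ ∑ |v j|`.
-/

open scoped NNReal

namespace Matrix

variable {n : Type*} [Fintype n]

theorem sum_mul_apply {α : Type*} [NonUnitalNonAssocSemiring α] (D R : Matrix n n α) (j : n) :
    ∑ i, (D * R) i j = ∑ k, (∑ i, D i k) * R k j := by
  simp only [mul_apply, Finset.sum_mul]
  exact Finset.sum_comm

theorem nonneg_of_mulVec_le_self {B : Matrix n n ℝ} (hB : ∀ i j, 0 ≤ B i j)
    (hcol : ∀ j, ∑ i, B i j < 1) {x : n → ℝ} (hx : B *ᵥ x ≤ x) : 0 ≤ x := by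
  have hslack : ∀ j, 0 < 1 - ∑ i, B i j := fun j => sub_pos.2 (hcol j)
  have hneg : ∀ i, (x i)⁻ ≤ ∑ j, B i j * (x j)⁻ := by
    intro i
    refine sup_le ?_ (Finset.sum_nonneg fun j _ => mul_nonneg (hB i j) (negPart_nonneg _))
    calc -x i ≤ -(B *ᵥ x) i := neg_le_neg (hx i)
      _ = ∑ j, B i j * -x j := by simp [mulVec, dotProduct]
      _ ≤ ∑ j, B i j * (x j)⁻ :=
          Finset.sum_le_sum fun j _ => mul_le_mul_of_nonneg_left (neg_le_negPart _) (hB i j)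
  have hsum : ∑ j, (1 - ∑ i, B i j) * (x j)⁻ ≤ 0 := by
    calc ∑ j, (1 - ∑ i, B i j) * (x j)⁻ = ∑ i, (x i)⁻ - ∑ i, ∑ j, B i j * (x j)⁻ := by
          simp only [sub_mul, one_mul, Finset.sum_sub_distrib, Finset.sum_mul]
          rw [Finset.sum_comm]
      _ ≤ 0 := sub_nonpos.2 (Finset.sum_le_sum fun i _ => hneg i)
  have hterms_nonneg : ∀ j ∈ Finset.univ, 0 ≤ (1 - ∑ i, B i j) * (x j)⁻ :=
    fun j _ => mul_nonneg (hslack j).le (negPart_nonneg _)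
  have hterms := (Finset.sum_eq_zero_iff_of_nonneg hterms_nonneg).1
    (hsum.antisymm (Finset.sum_nonneg hterms_nonneg))
  intro j
  have hj := hterms j (Finset.mem_univ j)
  rw [mul_eq_zero, negPart_eq_zero] at hj
  exact hj.resolve_left (hslack j).ne'

theorem norm_le_of_mulVec_eq_smul {𝕜 : Type*} [NormedField 𝕜] {M : Matrix n n 𝕜} {r : ℝ}
    (hM : ∀ j, ∑ i, ‖M i j‖ ≤ r) {v : n → 𝕜} (hv : v ≠ 0) {k : 𝕜} (hkv : M *ᵥ v = k • v) :
    ‖k‖ ≤ r := by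
  have hpos : 0 < ∑ j, ‖v j‖ := by
    obtain ⟨j, hj⟩ := Function.ne_iff.1 hv
    exact Finset.sum_pos' (fun j _ => norm_nonneg _) ⟨j, Finset.mem_univ j, norm_pos_iff.2 hj⟩
  refine le_of_mul_le_mul_right ?_ hpos
  calc ‖k‖ * ∑ j, ‖v j‖ = ∑ i, ‖(M *ᵥ v) i‖ := by simp [hkv, Finset.mul_sum, norm_mul]
    _ ≤ ∑ i, ∑ j, ‖M i j‖ * ‖v j‖ := Finset.sum_le_sum fun i _ =>
        (norm_sum_le _ _).trans (Finset.sum_le_sum fun j _ => (norm_mul _ _).le)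
    _ = ∑ j, (∑ i, ‖M i j‖) * ‖v j‖ := by
        simp only [Finset.sum_mul]
        exact Finset.sum_comm
    _ ≤ r * ∑ j, ‖v j‖ := by
        rw [Finset.mul_sum]
        exact Finset.sum_le_sum fun j _ => mul_le_mul_of_nonneg_right (hM j) (norm_nonneg _)

variable [DecidableEq n] {B : Matrix n n ℝ}

theorem isUnit_one_sub_of_sum_col_lt_one (hB : ∀ i j, 0 ≤ B i j)
    (hcol : ∀ j, ∑ i, B i j < 1) : IsUnit (1 - B) := by
  rw [isUnit_iff_isUnit_det, isUnit_iff_ne_zero, Ne, ← exists_mulVec_eq_zero_iff]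
  rintro ⟨v, hv, hker⟩
  have hfix : B *ᵥ v = v := by
    rw [sub_mulVec, one_mulVec, sub_eq_zero] at hker
    exact hker.symm
  have hv_nonneg := nonneg_of_mulVec_le_self hB hcol hfix.le
  have hv_nonpos := nonneg_of_mulVec_le_self hB hcol (x := -v) (by rw [mulVec_neg, hfix])
  exact hv (le_antisymm (neg_nonneg.1 hv_nonpos) hv_nonneg)

theorem inv_one_sub_nonneg (hB : ∀ i j, 0 ≤ B i j) (hcol : ∀ j, ∑ i, B i j < 1) (i j : n) :
    0 ≤ (1 - B)⁻¹ i j := by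
  set R := (1 - B)⁻¹
  have hR : (1 - B) * R = 1 :=
    mul_nonsing_inv _ ((isUnit_iff_isUnit_det _).1 (isUnit_one_sub_of_sum_col_lt_one hB hcol))
  have hBR : B * R = R - 1 := by
    rw [sub_mul, one_mul] at hR
    rw [← hR, sub_sub_cancel]
  have hcolumn : B *ᵥ (fun k => R k j) ≤ fun k => R k j := by
    intro k
    change (B * R) k j ≤ R k j
    rw [hBR, sub_apply, sub_le_self_iff]
    by_cases hkj : k = j <;> simp [one_apply, hkj]
  exact nonneg_of_mulVec_le_self hB hcol hcolumn i

theorem sum_col_mul_le_one {D M R : Matrix n n ℝ} (hR : ∀ i j, 0 ≤ R i j) (hMR : M * R = 1)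
    (hDM : ∀ k, ∑ i, D i k ≤ ∑ i, M i k) (j : n) : ∑ i, (D * R) i j ≤ 1 :=
  calc ∑ i, (D * R) i j = ∑ k, (∑ i, D i k) * R k j := sum_mul_apply D R j
    _ ≤ ∑ k, (∑ i, M i k) * R k j :=
        Finset.sum_le_sum fun k _ => mul_le_mul_of_nonneg_right (hDM k) (hR k j)
    _ = ∑ i, (M * R) i j := (sum_mul_apply M R j).symm
    _ = 1 := by simp [hMR, one_apply]

theorem spectralRadius_le_of_sum_norm_col_le {𝕜 : Type*} [NormedField 𝕜] (M : Matrix n n 𝕜)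
    {r : ℝ≥0} (hM : ∀ j, ∑ i, ‖M i j‖ ≤ r) : spectralRadius 𝕜 M ≤ r := by
  refine iSup₂_le fun k hk => ?_
  rw [spectrum.mem_iff, isUnit_iff_isUnit_det, isUnit_iff_ne_zero, not_not,
    ← exists_mulVec_eq_zero_iff] at hk
  obtain ⟨v, hv, hker⟩ := hk
  have heig : M *ᵥ v = k • v := by
    rw [sub_mulVec, sub_eq_zero, Algebra.algebraMap_eq_smul_one, smul_mulVec, one_mulVec] at hker
    exact hker.symm
  exact_mod_cast norm_le_of_mulVec_eq_smul hM hv heig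

end Matrix

theorem specRad_le_of_sum_col_le {n : ℕ} {M : Matrix (Fin n) (Fin n) ℝ} (hM : ∀ i j, 0 ≤ M i j)
    {r : ℝ≥0} (hcol : ∀ j, ∑ i, M i j ≤ r) : specRad M ≤ r :=
  spectralRadius_le_of_sum_norm_col_le _ fun j => by
    simpa [Complex.norm_real, abs_of_nonneg (hM _ j)] using hcol j

/-- **Column sums of the system matrix are at most one.**
If `Q` is entrywise nonnegative with every column sum at most `1`, and `P = diagonal p`
with `0 ≤ p j < 1` for all `j`, then `I - Q * P` is invertible, every column sum of
`A = (I - P) * (I - Q * P)⁻¹` is at most `1`, and consequently the spectral radius of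
`A` is at most `1`. -/
theorem system_matrix_colSum_le_one {n : ℕ} (Q : Matrix (Fin n) (Fin n) ℝ)
    (p : Fin n → ℝ) (hQ : ∀ i j, 0 ≤ Q i j) (hQcol : ∀ j, ∑ i, Q i j ≤ 1)
    (hp0 : ∀ j, 0 ≤ p j) (hp1 : ∀ j, p j < 1) :
    IsUnit (1 - Q * diagonal p) ∧
      (∀ j, ∑ i, ((1 - diagonal p) * (1 - Q * diagonal p)⁻¹) i j ≤ 1) ∧
      specRad ((1 - diagonal p) * (1 - Q * diagonal p)⁻¹) ≤ 1 := by
  set B := Q * diagonal p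
  have hB : ∀ i j, 0 ≤ B i j := fun i j => by
    simpa only [B, mul_diagonal] using mul_nonneg (hQ i j) (hp0 j)
  have hBcol : ∀ j, ∑ i, B i j ≤ p j := fun j => by
    simpa [B, mul_diagonal, ← Finset.sum_mul] using mul_le_of_le_one_left (hp0 j) (hQcol j)
  have hBcol_lt : ∀ j, ∑ i, B i j < 1 := fun j => (hBcol j).trans_lt (hp1 j)
  have hunit := isUnit_one_sub_of_sum_col_lt_one hB hBcol_lt
  have hD : ∀ i k, 0 ≤ (1 - diagonal p) i k := fun i k => by
    by_cases hik : i = k <;> simp [one_apply, hik, (hp1 k).le]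
  have hDcol : ∀ k, ∑ i, (1 - diagonal p) i k ≤ ∑ i, (1 - B) i k := fun k => by
    simp only [Matrix.sub_apply, Finset.sum_sub_distrib]
    exact sub_le_sub_left (by simpa [diagonal_apply] using hBcol k) _
  have hR := inv_one_sub_nonneg hB hBcol_lt
  have hcol := sum_col_mul_le_one hR (mul_nonsing_inv _ ((isUnit_iff_isUnit_det _).1 hunit)) hDcol
  have hA : ∀ i j, 0 ≤ ((1 - diagonal p) * (1 - B)⁻¹) i j := fun i j => by
    rw [mul_apply]
    exact Finset.sum_nonneg fun k _ => mul_nonneg (hD i k) (hR k j)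
  exact ⟨hunit, hcol, specRad_le_of_sum_col_le hA (by exact_mod_cast hcol)⟩
end

section
/- Let Q be an n×n real matrix that is entrywise nonnegative with every column sum strictly less than 1 (Σ_i Q_{ij} < 1 for all j), and let P = diag(p_1, …, p_n) be a diagonal matrix with 0 < p_j < 1 for all j. Then I − QP is invertible, every column sum of A = (I − P)(I − QP)^{−1} is strictly less than 1, and consequently the spectral radius of A is strictly less than 1. -/
open scoped ENNReal NNReal
open Matrix

section Aux

attribute [local instance] Matrix.linftyOpNormedRing Matrix.linftyOpNormedAlgebra

variable {n : ℕ}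

local instance : CompleteSpace (Matrix (Fin n) (Fin n) ℝ) :=
  (inferInstance : CompleteSpace (Fin n → Fin n → ℝ))

/-- Row sums strictly below one force the `linfty` operator norm below one. -/
lemma aux_norm_lt_one {T : Matrix (Fin n) (Fin n) ℝ}
    (h0 : ∀ i j, 0 ≤ T i j) (h1 : ∀ i, ∑ j, T i j < 1) : ‖T‖ < 1 := by
  rw [Matrix.linfty_opNorm_def]
  have h : (Finset.univ.sup fun i => ∑ j, ‖T i j‖₊ : ℝ≥0) < 1 := by
    refine Finset.sup_lt_iff (show ⊥ < (1:NNReal) by simp) |>.2 fun i _ => ?_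
    rw [← NNReal.coe_lt_coe]
    push_cast
    calc ∑ j, ‖T i j‖ = ∑ j, T i j := by
          refine Finset.sum_congr rfl fun j _ => ?_
          rw [Real.norm_eq_abs, abs_of_nonneg (h0 i j)]
      _ < 1 := h1 i
  exact_mod_cast h

lemma aux_pow_nonneg {T : Matrix (Fin n) (Fin n) ℝ} (h0 : ∀ i j, 0 ≤ T i j) :
    ∀ (k : ℕ) (i j : Fin n), 0 ≤ (T ^ k) i j := by
  intro k
  induction k with
  | zero => intro i j; by_cases h : i = j <;> simp [pow_zero, Matrix.one_apply, h]
  | succ m ih =>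
    intro i j
    rw [pow_succ, Matrix.mul_apply]
    exact Finset.sum_nonneg fun l _ => mul_nonneg (ih i l) (h0 l j)

lemma aux_inverse_nonneg {T : Matrix (Fin n) (Fin n) ℝ}
    (h0 : ∀ i j, 0 ≤ T i j) (hT : ‖T‖ < 1) :
    ∀ i j, 0 ≤ Ring.inverse (1 - T) i j := by
  intro i j
  have hs := hasSum_geom_series_inverse T hT
  have hcont : Continuous fun M : Matrix (Fin n) (Fin n) ℝ => M i j :=
    (continuous_apply j).comp (continuous_apply i)
  have hmap :=
    hs.map (AddMonoidHom.mk' (fun M : Matrix (Fin n) (Fin n) ℝ => M i j)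
      (fun a b => rfl)) hcont
  exact hmap.nonneg fun k => aux_pow_nonneg h0 k i j

lemma aux_spectrum_transpose (M : Matrix (Fin n) (Fin n) ℂ) :
    spectrum ℂ Mᵀ = spectrum ℂ M := by
  ext k
  simp only [spectrum.mem_iff, not_iff_not]
  rw [Matrix.isUnit_iff_isUnit_det, Matrix.isUnit_iff_isUnit_det, ← Matrix.det_transpose,
    Matrix.transpose_sub, Matrix.transpose_transpose, Algebra.algebraMap_eq_smul_one,
    Matrix.transpose_smul, Matrix.transpose_one]

/-- Column sums strictly below one (with nonnegative entries) force spectral radius below one. -/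
lemma aux_specRad_lt_one {A : Matrix (Fin n) (Fin n) ℝ}
    (h0 : ∀ i j, 0 ≤ A i j) (h1 : ∀ j, ∑ i, A i j < 1) : specRad A < 1 := by
  rcases Nat.eq_zero_or_pos n with hn | hn
  · subst hn
    have : (A.map fun a => (a : ℂ)) = 0 := Subsingleton.elim _ _
    rw [specRad, this, spectrum.spectralRadius_zero]
    norm_num
  · have : Nonempty (Fin n) := ⟨⟨0, hn⟩⟩
    have key : spectralRadius ℂ ((A.map fun a => (a : ℂ))ᵀ) < 1 := by
      refine lt_of_le_of_lt (spectrum.spectralRadius_le_nnnorm ((A.map fun a => (a : ℂ))ᵀ)) ?_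
      have hnorm : ‖(A.map fun a => (a : ℂ))ᵀ‖₊ < 1 := by
        rw [Matrix.linfty_opNNNorm_def]
        refine Finset.sup_lt_iff (show ⊥ < (1:NNReal) by simp) |>.2 fun i _ => ?_
        rw [← NNReal.coe_lt_coe]
        push_cast
        calc ∑ j, ‖(A.map fun a => (a : ℂ))ᵀ i j‖
            = ∑ j, A j i := by
              refine Finset.sum_congr rfl fun j _ => ?_
              simp [Matrix.transpose_apply, Matrix.map_apply, Complex.norm_real,
                Real.norm_eq_abs, abs_of_nonneg (h0 j i)]
          _ < 1 := h1 i
      exact_mod_cast ENNReal.coe_lt_coe.2 hnorm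
    rw [specRad, spectralRadius, ← aux_spectrum_transpose]
    exact key

theorem system_matrix_aux {n : ℕ} (Q : Matrix (Fin n) (Fin n) ℝ)
    (p : Fin n → ℝ) (hQ : ∀ i j, 0 ≤ Q i j) (hQcol : ∀ j, ∑ i, Q i j < 1)
    (hp0 : ∀ j, 0 < p j) (hp1 : ∀ j, p j < 1) :
    IsUnit (1 - Q * diagonal p) ∧
      (∀ j, ∑ i, ((1 - diagonal p) * (1 - Q * diagonal p)⁻¹) i j < 1) ∧
      specRad ((1 - diagonal p) * (1 - Q * diagonal p)⁻¹) < 1 := by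
  set B : Matrix (Fin n) (Fin n) ℝ := Q * diagonal p with hBdef
  have hBentry : ∀ i j, B i j = Q i j * p j := fun i j => Matrix.mul_diagonal ..
  have hB0 : ∀ i j, 0 ≤ B i j := fun i j => by
    rw [hBentry]; exact mul_nonneg (hQ i j) (hp0 j).le
  set T : Matrix (Fin n) (Fin n) ℝ := Bᵀ with hTdef
  have hT0 : ∀ i j, 0 ≤ T i j := fun i j => hB0 j i
  have hTrow : ∀ i, ∑ j, T i j < 1 := by
    intro i
    have : ∑ j, T i j = (∑ j, Q j i) * p i := by
      simp_rw [hTdef, Matrix.transpose_apply, hBentry, ← Finset.sum_mul]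
    rw [this]
    have hs0 : 0 ≤ ∑ j, Q j i := Finset.sum_nonneg fun j _ => hQ j i
    nlinarith [hQcol i, hp0 i, hp1 i]
  have hTnorm : ‖T‖ < 1 := aux_norm_lt_one hT0 hTrow
  have hUnitT : IsUnit (1 - T) := isUnit_one_sub_of_norm_lt_one hTnorm
  have h1B : (1 - B)ᵀ = 1 - T := by rw [Matrix.transpose_sub, Matrix.transpose_one]
  have hUnit : IsUnit (1 - B) := by
    rw [Matrix.isUnit_iff_isUnit_det, ← Matrix.det_transpose, h1B,
      ← Matrix.isUnit_iff_isUnit_det]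
    exact hUnitT
  refine ⟨hUnit, ?_⟩
  set N : Matrix (Fin n) (Fin n) ℝ := (1 - B)⁻¹ with hNdef
  have hNT : Nᵀ = (1 - T)⁻¹ := by rw [hNdef, Matrix.transpose_nonsing_inv, h1B]
  have hN0 : ∀ i j, 0 ≤ N i j := by
    intro i j
    have : N i j = (1 - T)⁻¹ j i := by rw [← hNT]; rfl
    rw [this, Matrix.nonsing_inv_eq_ringInverse]
    exact aux_inverse_nonneg hT0 hTnorm j i
  have hdet : IsUnit (1 - B).det := Matrix.isUnit_iff_isUnit_det _ |>.1 hUnit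
  have hmulinv : (1 - B) * N = 1 := Matrix.mul_nonsing_inv _ hdet
  have hNeq : N = 1 + B * N := by
    have h := hmulinv
    rw [sub_mul, one_mul] at h
    exact eq_add_of_sub_eq h
  have hNdiag : ∀ j, 1 ≤ N j j := by
    intro j
    have : N j j = 1 + (B * N) j j := by
      conv_lhs => rw [hNeq]
      simp [Matrix.add_apply, Matrix.one_apply]
    rw [this]
    have : 0 ≤ (B * N) j j := by
      rw [Matrix.mul_apply]
      exact Finset.sum_nonneg fun k _ => mul_nonneg (hB0 j k) (hN0 k j)
    linarith
  -- column-sum identity for N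
  have hcolN : ∀ j, ∑ i, N i j = 1 + ∑ k, ((∑ i, Q i k) * p k) * N k j := by
    intro j
    have h1 : ∑ i, ((1 - B) * N) i j = (1 : ℝ) := by
      rw [hmulinv]
      simp [Matrix.one_apply]
    have h2 : ∀ i, ((1 - B) * N) i j = N i j - (B * N) i j := by
      intro i
      rw [sub_mul, one_mul, Matrix.sub_apply]
    rw [Finset.sum_congr rfl fun i _ => h2 i, Finset.sum_sub_distrib] at h1
    have h3 : ∑ i, (B * N) i j = ∑ k, ((∑ i, Q i k) * p k) * N k j := by
      simp_rw [Matrix.mul_apply]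
      rw [Finset.sum_comm]
      refine Finset.sum_congr rfl fun k _ => ?_
      simp_rw [hBentry, ← Finset.sum_mul]
    rw [h3] at h1
    linarith
  have hAentry : ∀ i j, ((1 - diagonal p) * N) i j = (1 - p i) * N i j := by
    intro i j
    have : (1 : Matrix (Fin n) (Fin n) ℝ) - diagonal p = diagonal (fun i => 1 - p i) := by
      rw [← Matrix.diagonal_one, ← Matrix.diagonal_sub]
    rw [this, Matrix.diagonal_mul]
  have hA0 : ∀ i j, 0 ≤ ((1 - diagonal p) * N) i j := by
    intro i j
    rw [hAentry]
    exact mul_nonneg (by linarith [hp1 i]) (hN0 i j)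
  have hAcol : ∀ j, ∑ i, ((1 - diagonal p) * N) i j < 1 := by
    intro j
    have hexp : ∑ i, ((1 - diagonal p) * N) i j
        = ∑ i, N i j - ∑ i, p i * N i j := by
      simp_rw [hAentry, sub_mul, one_mul]
      rw [Finset.sum_sub_distrib]
    have hpos : 0 < ∑ k, p k * (1 - ∑ i, Q i k) * N k j := by
      refine Finset.sum_pos' (fun k _ => ?_) ⟨j, Finset.mem_univ j, ?_⟩
      · exact mul_nonneg (mul_nonneg (hp0 k).le (by linarith [hQcol k])) (hN0 k j)
      · have h1 : 0 < p j * (1 - ∑ i, Q i j) :=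
          mul_pos (hp0 j) (by linarith [hQcol j])
        calc (0:ℝ) < p j * (1 - ∑ i, Q i j) * 1 := by linarith
          _ ≤ p j * (1 - ∑ i, Q i j) * N j j := by
              exact mul_le_mul_of_nonneg_left (hNdiag j) h1.le
    have hsplit : ∑ k, p k * (1 - ∑ i, Q i k) * N k j
        = ∑ k, p k * N k j - ∑ k, ((∑ i, Q i k) * p k) * N k j := by
      rw [← Finset.sum_sub_distrib]
      exact Finset.sum_congr rfl fun k _ => by ring
    rw [hexp, hcolN j]
    rw [hsplit] at hpos
    linarith
  exact ⟨hAcol, aux_specRad_lt_one hA0 hAcol⟩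

end Aux

/-- **Strict contraction of the system matrix.**
If `Q` is entrywise nonnegative with every column sum strictly less than `1`, and
`P = diagonal p` with `0 < p j < 1` for all `j`, then `I - Q * P` is invertible, every
column sum of `A = (I - P) * (I - Q * P)⁻¹` is strictly less than `1`, and consequently
the spectral radius of `A` is strictly less than `1`. -/
theorem system_matrix_spectralRadius_lt_one {n : ℕ} (Q : Matrix (Fin n) (Fin n) ℝ)
    (p : Fin n → ℝ) (hQ : ∀ i j, 0 ≤ Q i j) (hQcol : ∀ j, ∑ i, Q i j < 1)
    (hp0 : ∀ j, 0 < p j) (hp1 : ∀ j, p j < 1) :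
    IsUnit (1 - Q * diagonal p) ∧
      (∀ j, ∑ i, ((1 - diagonal p) * (1 - Q * diagonal p)⁻¹) i j < 1) ∧
      specRad ((1 - diagonal p) * (1 - Q * diagonal p)⁻¹) < 1 :=
  system_matrix_aux Q p hQ hQcol hp0 hp1
end

section
/- For each k ≥ 1 let Q_k be an n×n real matrix that is entrywise nonnegative, let P_k = diag(p_1[k], …, p_n[k]) be diagonal with 0 ≤ p_j[k] < 1 for all j, suppose the spectral radius of Q_k P_k is strictly less than 1, and let c_k ∈ ℝ^n be entrywise nonnegative. If the sequence (x_k)_{k≥1} in ℝ^n satisfies x_{k+1} = (I − P_k)(I − Q_k P_k)^{−1}(x_k + c_k) for all k ≥ 1 and x_1 is entrywise nonnegative, then x_k is entrywise nonnegative for every k ≥ 1. -/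
open scoped ENNReal
open Matrix

attribute [local instance] Matrix.linftyOpNormedAddCommGroup Matrix.linftyOpNormedRing
  Matrix.linftyOpNormedAlgebra

namespace TrafficAux

variable {n : ℕ}

lemma pow_entry_nonneg (A : Matrix (Fin n) (Fin n) ℝ) (hA : ∀ i j, 0 ≤ A i j) (m : ℕ) :
    ∀ i j, 0 ≤ (A ^ m) i j := by
  induction m with
  | zero =>
    intro i j
    by_cases h : i = j <;> simp [pow_zero, Matrix.one_apply, h]
  | succ m ih =>
    intro i j
    rw [pow_succ, Matrix.mul_apply]
    exact Finset.sum_nonneg fun k _ => mul_nonneg (ih i k) (hA k j)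

lemma entry_norm_le (M : Matrix (Fin n) (Fin n) ℝ) (i j : Fin n) : ‖M i j‖ ≤ ‖M‖ := by
  have h1 : ‖M i j‖₊ ≤ ∑ k, ‖M i k‖₊ :=
    Finset.single_le_sum (f := fun k => ‖M i k‖₊) (fun k _ => zero_le) (Finset.mem_univ j)
  have h2 : (∑ k, ‖M i k‖₊) ≤ ‖M‖₊ := by
    rw [Matrix.linfty_opNNNorm_def]
    exact Finset.le_sup (f := fun i => ∑ k, ‖M i k‖₊) (Finset.mem_univ i)
  exact_mod_cast h1.trans h2

noncomputable instance : CompleteSpace (Matrix (Fin n) (Fin n) ℂ) :=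
  FiniteDimensional.complete ℂ _

noncomputable instance : CompleteSpace (Matrix (Fin n) (Fin n) ℝ) :=
  FiniteDimensional.complete ℝ _

/-- The linfty operator norm of a real matrix mapped to ℂ equals the real norm. -/
lemma nnnorm_map_complex (M : Matrix (Fin n) (Fin n) ℝ) :
    ‖M.map (fun a => (a : ℂ))‖₊ = ‖M‖₊ := by
  rw [Matrix.linfty_opNNNorm_def, Matrix.linfty_opNNNorm_def]
  congr 1
  ext i
  congr 1
  ext
  simp [Matrix.map_apply]

/-- If the spectral radius of a real matrix is `< 1`, some positive power has norm `< 1`. -/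
lemma exists_pow_norm_lt_one (A : Matrix (Fin n) (Fin n) ℝ) (hs : specRad A < 1) :
    ∃ m : ℕ, 1 ≤ m ∧ ‖A ^ m‖ < 1 := by
  set B := A.map (fun a => (a : ℂ)) with hB
  have hgel := spectrum.pow_nnnorm_pow_one_div_tendsto_nhds_spectralRadius B
  have hev := hgel.eventually_lt_const hs
  obtain ⟨N₀, hN₀⟩ := Filter.eventually_atTop.mp hev
  set m := max N₀ 1 with hm
  have hm1 : 1 ≤ m := le_max_right _ _
  have hmlt : ((‖B ^ m‖₊ : ℝ≥0∞) ^ (1 / (m : ℝ))) < 1 := hN₀ m (le_max_left _ _)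
  have hmpos : (0 : ℝ) < (m : ℝ) := by exact_mod_cast hm1
  have hkey : (‖B ^ m‖₊ : ℝ≥0∞) < 1 := by
    have h2 := ENNReal.rpow_lt_rpow hmlt hmpos
    rwa [← ENNReal.rpow_mul, one_div, inv_mul_cancel₀ (ne_of_gt hmpos), ENNReal.rpow_one,
      ENNReal.one_rpow] at h2
  have hBm : B ^ m = (A ^ m).map (fun a => (a : ℂ)) := by
    rw [hB]
    have : A.map (fun a => (a : ℂ)) = Complex.ofRealHom.mapMatrix A := rfl
    rw [this, ← map_pow]
    rfl
  refine ⟨m, hm1, ?_⟩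
  have : (‖A ^ m‖₊ : ℝ≥0∞) < 1 := by rwa [hBm, nnnorm_map_complex] at hkey
  have h3 : ‖A ^ m‖₊ < 1 := by exact_mod_cast this
  exact_mod_cast h3

/-- Key lemma: the inverse of `1 - A` is entrywise nonnegative when `A` is entrywise
nonnegative with spectral radius `< 1`. -/
lemma inv_one_sub_entry_nonneg (A : Matrix (Fin n) (Fin n) ℝ)
    (hA : ∀ i j, 0 ≤ A i j) (hs : specRad A < 1) :
    ∀ i j, 0 ≤ (1 - A)⁻¹ i j := by
  obtain ⟨m, hm1, hCnorm⟩ := exists_pow_norm_lt_one A hs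
  set C := A ^ m with hC
  have hCpos : ∀ i j, 0 ≤ C i j := pow_entry_nonneg A hA m
  -- entries of (1 - C)⁻¹ are nonnegative via the geometric series
  have hCinv : ∀ i j, 0 ≤ (1 - C)⁻¹ i j := by
    intro i j
    rw [Matrix.nonsing_inv_eq_ringInverse]
    have hsum : HasSum (fun t : ℕ => C ^ t) (Ring.inverse (1 - C)) :=
      hasSum_geom_series_inverse C hCnorm
    -- evaluate entrywise
    have hcont : Continuous fun M : Matrix (Fin n) (Fin n) ℝ => M i j := by
      have := AddMonoidHomClass.continuous_of_bound
        (((Pi.evalAddMonoidHom (fun _ : Fin n => ℝ) j).comp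
          (Pi.evalAddMonoidHom (fun _ : Fin n => Fin n → ℝ) i)) :
          Matrix (Fin n) (Fin n) ℝ →+ ℝ) 1 (fun M => by
            show ‖M i j‖ ≤ 1 * ‖M‖; simpa using entry_norm_le M i j)
      exact this
    have hsum' : HasSum (fun t : ℕ => (C ^ t) i j) ((Ring.inverse (1 - C)) i j) :=
      hsum.map (((Pi.evalAddMonoidHom (fun _ : Fin n => ℝ) j).comp
        (Pi.evalAddMonoidHom (fun _ : Fin n => Fin n → ℝ) i))) hcont
    exact hasSum_le (fun t => pow_entry_nonneg C hCpos t i j) hasSum_zero hsum'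
  -- (1 - A)⁻¹ = (∑_{r<m} A^r) * (1 - C)⁻¹
  have hunitC : IsUnit (1 - C) := isUnit_one_sub_of_norm_lt_one hCnorm
  have hdet : IsUnit (1 - C).det := (Matrix.isUnit_iff_isUnit_det _).mp hunitC
  have hgeo : (1 - A) * (∑ r ∈ Finset.range m, A ^ r) = 1 - C := mul_neg_geom_sum A m
  have hrinv : (1 - A) * ((∑ r ∈ Finset.range m, A ^ r) * (1 - C)⁻¹) = 1 := by
    rw [← mul_assoc, hgeo, Matrix.mul_nonsing_inv _ hdet]
  have hinv_eq : (1 - A)⁻¹ = (∑ r ∈ Finset.range m, A ^ r) * (1 - C)⁻¹ :=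
    Matrix.inv_eq_right_inv hrinv
  intro i j
  rw [hinv_eq, Matrix.mul_apply]
  refine Finset.sum_nonneg fun k _ => mul_nonneg ?_ (hCinv k j)
  rw [Matrix.sum_apply]
  exact Finset.sum_nonneg fun r _ => pow_entry_nonneg A hA r i k

end TrafficAux

/-- **Non-negativity of traffic densities.**
For each `k ≥ 1`, let `Q k` be entrywise nonnegative, `P k = diagonal (p k)` with
`0 ≤ p k j < 1`, suppose the spectral radius of `Q k * P k` is strictly less than `1`,
and let `c k` be entrywise nonnegative. If
`x (k+1) = (I - P k)(I - Q k * P k)⁻¹ (x k + c k)` for all `k ≥ 1` and `x 1` is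
entrywise nonnegative, then `x k` is entrywise nonnegative for every `k ≥ 1`. -/
theorem traffic_density_nonneg {n : ℕ} (Q : ℕ → Matrix (Fin n) (Fin n) ℝ)
    (p : ℕ → Fin n → ℝ) (c x : ℕ → Fin n → ℝ)
    (hQ : ∀ k, 1 ≤ k → ∀ i j, 0 ≤ Q k i j)
    (hp0 : ∀ k, 1 ≤ k → ∀ j, 0 ≤ p k j)
    (hp1 : ∀ k, 1 ≤ k → ∀ j, p k j < 1)
    (hspec : ∀ k, 1 ≤ k → specRad (Q k * diagonal (p k)) < 1)
    (hc : ∀ k, 1 ≤ k → ∀ i, 0 ≤ c k i)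
    (hrec : ∀ k, 1 ≤ k →
      x (k + 1) = ((1 - diagonal (p k)) * (1 - Q k * diagonal (p k))⁻¹) *ᵥ (x k + c k))
    (hx1 : ∀ i, 0 ≤ x 1 i) :
    ∀ k, 1 ≤ k → ∀ i, 0 ≤ x k i := by
  intro k hk
  induction k, hk using Nat.le_induction with
  | base => exact hx1
  | succ k hk ih =>
    intro i
    rw [hrec k hk]
    set A := Q k * diagonal (p k) with hA
    have hAnn : ∀ i j, 0 ≤ A i j := by
      intro i j
      rw [hA, Matrix.mul_diagonal]
      exact mul_nonneg (hQ k hk i j) (hp0 k hk j)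
    have hInv : ∀ i j, 0 ≤ (1 - A)⁻¹ i j :=
      TrafficAux.inv_one_sub_entry_nonneg A hAnn (hspec k hk)
    have hD : (1 : Matrix (Fin n) (Fin n) ℝ) - diagonal (p k)
        = diagonal (fun j => 1 - p k j) := by
      rw [← Matrix.diagonal_one, Matrix.diagonal_sub]
    rw [Matrix.mulVec]
    dsimp [dotProduct]
    refine Finset.sum_nonneg fun j _ => mul_nonneg ?_ ?_
    · rw [Matrix.mul_apply]
      refine Finset.sum_nonneg fun l _ => mul_nonneg ?_ (hInv l j)
      rw [hD, Matrix.diagonal_apply]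
      by_cases h : i = l
      · subst h
        rw [if_pos rfl]
        linarith [hp1 k hk i]
      · simp [h]
    · exact add_nonneg (ih j) (hc k hk j)
end
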